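/- Let ℓ₁, ℓ₂, N be positive integers with ℓ₁ + ℓ₂ ≥ N. Then for 0 ≤ n ≤ min(ℓ₁,N), the identity (1+t)^N · Gₙ((1-t)/(1+t)) = Σ_{x=0}^{N} binom(N,x) 𝒬ₙ(x; ℓ₁, ℓ₂, N) t^x holds as an identity of rational functions (equivalently, of polynomials after clearing denominators), where Gₙ(s) = Σ_{k=0}^{n} (-n)_k (n-ℓ₁-ℓ₂-1)_k / ((-ℓ₁)_k k!) · ((1-s)/2)^k. -/
import Mathlib

/-- Pochhammer symbol `(a)_n = a(a+1)⋯(a+n-1)`. -/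
def poch {R : Type*} [CommRing R] (a : R) (n : ℕ) : R :=
  ∏ i ∈ Finset.range n, (a + i)

/-- Hahn polynomial with negative integer parameters. -/
def hahnQ (l1 l2 Nq : ℚ) (n : ℕ) (x : ℚ) : ℚ :=
  ∑ k ∈ Finset.range (n + 1),
    poch (-(n : ℚ)) k * poch ((n : ℚ) - l1 - l2 - 1) k * poch (-x) k /
      (poch (-l1) k * poch (-Nq) k * (k.factorial : ℚ))

/-- Normalized Jacobi polynomial with negative integer parameters. -/
def jacG (l1 l2 : ℕ) (n : ℕ) (t : ℚ) : ℚ :=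
  ∑ k ∈ Finset.range (n + 1),
    poch (-(n : ℚ)) k * poch ((n : ℚ) - l1 - l2 - 1) k /
      (poch (-(l1 : ℚ)) k * (k.factorial : ℚ)) * ((1 - t) / 2) ^ k

lemma poch_succ' (a : ℚ) (k : ℕ) : poch a (k + 1) = poch a k * (a + k) := by
  simp [poch, Finset.prod_range_succ]

lemma poch_neg_nat (m k : ℕ) : poch (-(m : ℚ)) k = (-1) ^ k * (m.descFactorial k : ℚ) := by
  induction k with
  | zero => simp [poch]
  | succ k ih =>
    rw [poch_succ', ih, Nat.descFactorial_succ]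
    rcases le_or_gt k m with h | h
    · push_cast [h]
      ring
    · have h0 : m.descFactorial k = 0 := Nat.descFactorial_eq_zero_iff_lt.mpr h
      simp [h0]

lemma choose_descFactorial (N k j : ℕ) (h : k + j ≤ N) :
    N.choose (k + j) * (k + j).descFactorial k = N.descFactorial k * (N - k).choose j := by
  have hkN : k ≤ N := le_trans (Nat.le_add_right _ _) h
  have hjNk : j ≤ N - k := by omega
  apply Nat.eq_of_mul_eq_mul_right (Nat.factorial_pos j)
  apply Nat.eq_of_mul_eq_mul_right (Nat.factorial_pos (N - k - j))
  have e1 : N.choose (k + j) * (k + j).factorial * (N - (k + j)).factorial = N.factorial :=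
    Nat.choose_mul_factorial_mul_factorial h
  have e2 : j.factorial * (k + j).descFactorial k = (k + j).factorial := by
    have := Nat.factorial_mul_descFactorial (show k ≤ k + j from Nat.le_add_right _ _)
    simpa [Nat.add_sub_cancel_left] using this
  have e3 : (N - k).factorial * N.descFactorial k = N.factorial := Nat.factorial_mul_descFactorial hkN
  have e4 : (N - k).choose j * j.factorial * (N - k - j).factorial = (N - k).factorial :=
    Nat.choose_mul_factorial_mul_factorial hjNk
  calc N.choose (k + j) * (k + j).descFactorial k * j.factorial * (N - k - j).factorial
      = N.choose (k + j) * (j.factorial * (k + j).descFactorial k) * (N - (k + j)).factorial := by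
        rw [show N - k - j = N - (k + j) by omega]; ring
    _ = N.factorial := by rw [e2, e1]
    _ = N.descFactorial k * ((N - k).choose j * j.factorial * (N - k - j).factorial) := by
        rw [e4, mul_comm, e3]
    _ = N.descFactorial k * (N - k).choose j * j.factorial * (N - k - j).factorial := by ring

lemma key_sum (N k : ℕ) (hk : k ≤ N) (t : ℚ) :
    ∑ x ∈ Finset.range (N + 1),
        (N.choose x : ℚ) * (poch (-(x : ℚ)) k / poch (-(N : ℚ)) k) * t ^ x =
      t ^ k * (1 + t) ^ (N - k) := by
  have hNdesc : (N.descFactorial k : ℚ) ≠ 0 := by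
    rw [Nat.cast_ne_zero]
    exact fun hz => absurd (Nat.descFactorial_eq_zero_iff_lt.mp hz) (Nat.not_lt.mpr hk)
  have hzero : ∀ x ∈ Finset.range k,
      (N.choose x : ℚ) * (poch (-(x : ℚ)) k / poch (-(N : ℚ)) k) * t ^ x = 0 := by
    intro x hx
    rw [poch_neg_nat x k,
      Nat.descFactorial_eq_zero_iff_lt.mpr (Finset.mem_range.mp hx)]
    simp
  rw [Finset.range_eq_Ico, ← Finset.sum_Ico_consecutive _ (Nat.zero_le k) (by omega),
    ← Finset.range_eq_Ico, Finset.sum_eq_zero hzero, zero_add,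
    Finset.sum_Ico_eq_sum_range]
  have hcount : N + 1 - k = N - k + 1 := by omega
  rw [hcount]
  have hbin : (1 + t) ^ (N - k) = ∑ j ∈ Finset.range (N - k + 1), (N - k).choose j * t ^ j := by
    rw [add_comm 1 t, add_pow]
    simp [mul_comm]
  rw [hbin, Finset.mul_sum]
  apply Finset.sum_congr rfl
  intro j hj
  have hj' : j ≤ N - k := Nat.lt_succ_iff.mp (Finset.mem_range.mp hj)
  have hkj : k + j ≤ N := by omega
  rw [poch_neg_nat, poch_neg_nat]
  have key := choose_descFactorial N k j hkj
  have keyQ : (N.choose (k + j) : ℚ) * ((k + j).descFactorial k : ℚ) =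
      (N.descFactorial k : ℚ) * ((N - k).choose j : ℚ) := by exact_mod_cast key
  have : ((-1 : ℚ) ^ k * ((k + j).descFactorial k : ℚ)) / ((-1) ^ k * (N.descFactorial k : ℚ))
      = ((k + j).descFactorial k : ℚ) / (N.descFactorial k : ℚ) := by
    rw [mul_div_mul_left]
    positivity
  rw [this]
  rw [pow_add]
  field_simp
  linear_combination t ^ k * t ^ j * keyQ

theorem hahn_generating_function (N l1 l2 : ℕ) (hN : 0 < N) (h1 : 0 < l1) (h2 : 0 < l2)
    (h : N ≤ l1 + l2) (n : ℕ) (hn : n ≤ min l1 N) :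
    ∀ t : ℚ, t ≠ -1 →
      (1 + t) ^ N * jacG l1 l2 n ((1 - t) / (1 + t)) =
        ∑ x ∈ Finset.range (N + 1), (N.choose x : ℚ) * hahnQ l1 l2 N n x * t ^ x := by
  intro t ht
  have h1t : (1 : ℚ) + t ≠ 0 := by
    intro hc; apply ht; linarith
  have hs : (1 - (1 - t) / (1 + t)) / 2 = t / (1 + t) := by
    field_simp
    ring
  set c : ℕ → ℚ := fun k =>
    poch (-(n : ℚ)) k * poch ((n : ℚ) - l1 - l2 - 1) k /
      (poch (-(l1 : ℚ)) k * (k.factorial : ℚ)) with hc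
  have hnN : n ≤ N := le_trans hn (min_le_right _ _)
  have LHS : (1 + t) ^ N * jacG l1 l2 n ((1 - t) / (1 + t)) =
      ∑ k ∈ Finset.range (n + 1), c k * (t ^ k * (1 + t) ^ (N - k)) := by
    rw [jacG, Finset.mul_sum]
    apply Finset.sum_congr rfl
    intro k hk
    have hkn : k ≤ n := Nat.lt_succ_iff.mp (Finset.mem_range.mp hk)
    have hkN : k ≤ N := le_trans hkn hnN
    rw [hs]
    have hpow : (1 + t) ^ N = (1 + t) ^ (N - k) * (1 + t) ^ k := by
      rw [← pow_add, Nat.sub_add_cancel hkN]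
    have hcan : (t / (1 + t)) ^ k * (1 + t) ^ k = t ^ k := by
      rw [div_pow, div_mul_cancel₀]
      exact pow_ne_zero _ h1t
    rw [hpow]
    linear_combination (c k) * (1 + t) ^ (N - k) * hcan
  rw [LHS]
  have RHS : ∀ x : ℕ, (N.choose x : ℚ) * hahnQ l1 l2 N n x * t ^ x =
      ∑ k ∈ Finset.range (n + 1),
        c k * ((N.choose x : ℚ) * (poch (-(x : ℚ)) k / poch (-(N : ℚ)) k) * t ^ x) := by
    intro x
    rw [hahnQ, Finset.mul_sum, Finset.sum_mul]
    apply Finset.sum_congr rfl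
    intro k hk
    simp only [hc, div_eq_mul_inv, mul_inv]
    ring
  simp only [RHS]
  rw [Finset.sum_comm]
  apply Finset.sum_congr rfl
  intro k hk
  rw [← Finset.mul_sum, key_sum N k (le_trans (Nat.lt_succ_iff.mp (Finset.mem_range.mp hk)) hnN) t]
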